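/- arXiv:1611.02994 — 2 statements merged into one kernel-verified Lean document; each statement's English description precedes it below -/
import Mathlib

section
/- Let E be a real Banach space. The weak* dual of E, i.e., the topological dual E′ endowed with the weak* topology σ(E′,E) of pointwise convergence on E (in Mathlib, WeakDual ℝ E), is an Ascoli space if and only if E is finite-dimensional. -/
/-!
If `E` is finite-dimensional, the weak* dual is a finite-dimensional topological vector space,
hence locally compact; on a locally compact space `Y` evaluation `C(Y, ℝ) × Y → ℝ` is jointly
continuous, and joint continuity on `Y × K` with `K` compact is equicontinuity of `K`.

Conversely, weak*-compact sets are norm bounded (Banach–Steinhaus), so `x ↦ (f ↦ f x)` is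
continuous from `E` to `C(WeakDual ℝ E, ℝ)` and maps a compact `S ⊆ E` to a compact set.
Equicontinuity of that family at `0` yields a finite set `s` such that every functional
vanishing on `s` is bounded by `1` on `S`. Such functionals form a subspace, so they vanish
on `S`, and Hahn–Banach gives `S ⊆ span s`. A null sequence of linearly independent vectors is
a compact set contained in no finite-dimensional subspace.
-/

open Set Topology

/-- A topological space `Y` is Ascoli if every compact subset of `C(Y,ℝ)` (with the
compact-open topology) is equicontinuous. -/
def IsAscoli (Y : Type*) [TopologicalSpace Y] : Prop :=
  ∀ K : Set C(Y, ℝ), IsCompact K → Equicontinuous fun f : K => ((f : C(Y, ℝ)) : Y → ℝ)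

open Filter

theorem ContinuousMap.equicontinuous_of_isCompact {Y α : Type*} [TopologicalSpace Y]
    [LocallyCompactSpace Y] [UniformSpace α] {K : Set C(Y, α)} (hK : IsCompact K) :
    Equicontinuous fun f : K => ((f : C(Y, α)) : Y → α) := by
  have : CompactSpace K := isCompact_iff_compactSpace.1 hK
  intro y
  let ev : C(Y × K, α) := ⟨fun p => (p.2 : C(Y, α)) p.1,
    continuous_eval.comp ((continuous_subtype_val.comp continuous_snd).prodMk continuous_fst)⟩
  exact ContinuousMap.tendsto_iff_tendstoUniformly.1 (ev.curry.continuous.tendsto y)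

theorem isAscoli_of_locallyCompactSpace (Y : Type*) [TopologicalSpace Y]
    [LocallyCompactSpace Y] : IsAscoli Y :=
  fun _ => ContinuousMap.equicontinuous_of_isCompact

namespace WeakDual

section NontriviallyNormedField

variable {𝕜 E : Type*} [NontriviallyNormedField 𝕜] [NormedAddCommGroup E] [NormedSpace 𝕜 E]

theorem exists_finset_forall_eq_zero_mem {V : Set (WeakDual 𝕜 E)} (hV : V ∈ 𝓝 0) :
    ∃ s : Finset E, ∀ f : WeakDual 𝕜 E, (∀ x ∈ s, f x = 0) → f ∈ V := by
  obtain ⟨s, r, hr, hsub⟩ := (withSeminorms 𝕜 E).mem_nhds_iff 0 V |>.1 hV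
  refine ⟨s, fun f hf => hsub ?_⟩
  rw [Seminorm.mem_ball_zero]
  exact Seminorm.finset_sup_apply_lt hr fun x hx => by simpa [hf x hx] using hr

variable (𝕜) in
noncomputable def evalContinuousMap (x : E) : C(WeakDual 𝕜 E, 𝕜) :=
  ⟨fun f => f x, eval_continuous x⟩

theorem continuous_evalContinuousMap [CompleteSpace E] :
    Continuous (evalContinuousMap 𝕜 (E := E)) := by
  refine continuous_iff_continuousAt.2 fun x₀ => ?_
  rw [ContinuousAt, ContinuousMap.tendsto_iff_forall_isCompact_tendstoUniformlyOn]
  intro Q hQ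
  obtain ⟨C, hC⟩ := (isBounded_iff_isVonNBounded.2 (hQ.isVonNBounded 𝕜)).exists_norm_le
  have hlim : Tendsto (fun x => C * ‖x₀ - x‖) (𝓝 x₀) (𝓝 0) := by
    simpa using ((continuous_const (y := x₀)).sub continuous_id |>.norm.const_mul C).tendsto x₀
  rw [Metric.tendstoUniformlyOn_iff]
  intro ε hε
  filter_upwards [hlim.eventually (gt_mem_nhds hε)] with x hx f hf
  calc dist (f x₀) (f x) = ‖toStrongDual f (x₀ - x)‖ := by simp [dist_eq_norm]
    _ ≤ ‖toStrongDual f‖ * ‖x₀ - x‖ := (toStrongDual f).le_opNorm _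
    _ ≤ C * ‖x₀ - x‖ := by gcongr; exact hC f hf
    _ < ε := hx

end NontriviallyNormedField

end WeakDual

theorem exists_linearIndependent_nat_of_not_finiteDimensional {K V : Type*} [DivisionRing K]
    [AddCommGroup V] [Module K V] (hV : ¬FiniteDimensional K V) :
    ∃ v : ℕ → V, LinearIndependent K v := by
  let b := Module.Basis.ofVectorSpace K V
  have : Infinite (Module.Basis.ofVectorSpaceIndex K V) := by
    rw [← not_finite_iff_infinite]
    exact fun _ => hV (.of_basis b)
  exact ⟨b ∘ Infinite.natEmbedding _, b.linearIndependent.comp _ (Infinite.natEmbedding _).injective⟩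

section RCLike

variable {𝕜 E : Type*} [RCLike 𝕜] [NormedAddCommGroup E] [NormedSpace 𝕜 E]

theorem Submodule.exists_strongDual_apply_ne_zero_of_notMem {p : Submodule 𝕜 E}
    (hp : IsClosed (p : Set E)) {x : E} (hx : x ∉ p) :
    ∃ f : StrongDual 𝕜 E, f x ≠ 0 ∧ ∀ y ∈ p, f y = 0 := by
  have : IsClosed (p : Set E) := hp -- as an instance, this makes `E ⧸ p` a normed space
  obtain ⟨g, hg⟩ := SeparatingDual.exists_ne_zero (R := 𝕜) (x := p.mkQ x)
    (by simpa [Submodule.Quotient.mk_eq_zero] using hx)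
  exact ⟨g.comp p.mkQL, hg, fun y hy => by simp [(Submodule.Quotient.mk_eq_zero p).2 hy]⟩

theorem WeakDual.exists_finset_subset_span_of_equicontinuousAt {S : Set E}
    (h : EquicontinuousAt (fun x : S => fun f : WeakDual 𝕜 E => f x) 0) :
    ∃ s : Finset E, S ⊆ Submodule.span 𝕜 (s : Set E) := by
  obtain ⟨s, hs⟩ :=
    exists_finset_forall_eq_zero_mem (Metric.equicontinuousAt_iff_right.1 h 1 one_pos)
  refine ⟨s, fun x hx => ?_⟩
  by_contra hxs
  obtain ⟨φ, hφx, hφs⟩ := (Submodule.span 𝕜 (s : Set E)).exists_strongDual_apply_ne_zero_of_notMem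
    (Submodule.closed_of_finiteDimensional _) hxs
  have hsmall : ∀ c : 𝕜, dist 0 (c * φ x) < 1 := fun c =>
    hs (StrongDual.toWeakDual (c • φ))
      (fun y hy => show c * φ y = 0 by simp [hφs y (Submodule.subset_span hy)]) ⟨x, hx⟩
  simpa [hφx] using hsmall (φ x)⁻¹

theorem FiniteDimensional.of_forall_isCompact_subset_span
    (h : ∀ S : Set E, IsCompact S → ∃ s : Finset E, S ⊆ Submodule.span 𝕜 (s : Set E)) :
    FiniteDimensional 𝕜 E := by
  by_contra hE
  obtain ⟨v, hv⟩ := exists_linearIndependent_nat_of_not_finiteDimensional hE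
  let c : ℕ → 𝕜 := fun n => ((n + 1 : 𝕜) * ‖v n‖)⁻¹
  have hc : ∀ n, c n ≠ 0 := fun n => by simp [c, hv.ne_zero n, Nat.cast_add_one_ne_zero]
  have hlim : Tendsto (fun n => c n • v n) atTop (𝓝 0) := by
    rw [tendsto_zero_iff_norm_tendsto_zero]
    refine tendsto_one_div_add_atTop_nhds_zero_nat.congr fun n => ?_
    have : (0 : ℝ) < ‖v n‖ := norm_pos_iff.2 (hv.ne_zero n)
    have hn : ‖(n + 1 : 𝕜)‖ = n + 1 := by exact_mod_cast RCLike.norm_natCast (K := 𝕜) (n + 1)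
    simp only [c, norm_smul, norm_inv, norm_mul, RCLike.norm_ofReal, abs_norm, hn]
    field_simp
  obtain ⟨s, hs⟩ := h _ hlim.isCompact_insert_range
  have hspan : range v ⊆ Submodule.span 𝕜 (s : Set E) := by
    rintro _ ⟨n, rfl⟩
    have hn := hs (mem_insert_of_mem _ ⟨n, rfl⟩)
    simpa [smul_smul, hc n] using Submodule.smul_mem _ (c n)⁻¹ hn
  have := hv.finite_of_le_span_finite v s hspan
  exact _root_.not_finite ℕ

end RCLike

theorem WeakDual.exists_finset_subset_span_of_isAscoli {E : Type*} [NormedAddCommGroup E]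
    [NormedSpace ℝ E] [CompleteSpace E] (hE : IsAscoli (WeakDual ℝ E)) {S : Set E}
    (hS : IsCompact S) : ∃ s : Finset E, S ⊆ Submodule.span ℝ (s : Set E) := by
  have hK := hE _ (hS.image (continuous_evalContinuousMap (𝕜 := ℝ)))
  exact exists_finset_subset_span_of_equicontinuousAt <|
    (hK 0).comp fun x : S => ⟨evalContinuousMap ℝ x, mem_image_of_mem _ x.2⟩

/-- The weak* dual of a real Banach space `E` is an Ascoli space if and only if `E` is
finite-dimensional. -/
theorem statement5 (E : Type*) [NormedAddCommGroup E] [NormedSpace ℝ E] [CompleteSpace E] :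
    IsAscoli (WeakDual ℝ E) ↔ FiniteDimensional ℝ E := by
  refine ⟨fun h => .of_forall_isCompact_subset_span fun S hS =>
    WeakDual.exists_finset_subset_span_of_isAscoli h hS, fun _ => ?_⟩
  have : FiniteDimensional ℝ (WeakDual ℝ E) :=
    inferInstanceAs (FiniteDimensional ℝ (StrongDual ℝ E))
  have := LocallyCompactSpace.of_finiteDimensional_of_complete ℝ (WeakDual ℝ E)
  exact isAscoli_of_locallyCompactSpace _
end

section
/- Let X be a completely regular Hausdorff space which is a μ-space (every functionally bounded subset of X has compact closure) and a k-space (a subset of X is closed whenever its intersection with every compact subset K of X is closed in K; for example, X metrizable). Then C_k(X), the space C(X,ℝ) of continuous real-valued functions with the compact-open topology, is weakly Ascoli if and only if X is discrete. -/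
open Set Topology

/-- A subset `A` of a topological space `Y` is functionally bounded if every continuous
real-valued function on `Y` is bounded on `A`. -/
def FunctionallyBounded {Y : Type*} [TopologicalSpace Y] (A : Set Y) : Prop :=
  ∀ f : C(Y, ℝ), Bornology.IsBounded (f '' A)

/-!
If `X` is discrete, the weak topology of `C(X, ℝ) ≅ ℝ^X` is the product topology, and a product
of metric spaces is Ascoli: a failure of equicontinuity at `x₀` is witnessed along a sequence
tending to `x₀` (built from points differing from `x₀` in finitely many coordinates), while on the
compact set formed by such a sequence and its limit a compact family of functions is equicontinuous.

Conversely, let `kₙ` be distinct points of a compact `K ⊆ X`. The functionals `(n + 1)⁻¹ δ_{kₙ}`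
tend to `0` in norm on `C(K, ℝ)`, hence uniformly on weakly compact sets, so they form a
convergent sequence in `C(C(X, ℝ)_w, ℝ)`, which the Ascoli property makes equicontinuous at `0`.
An equicontinuous family of functionals for a weak topology lies in the span of finitely many
functionals, whereas point evaluations on a completely regular space are linearly independent.
Hence compact subsets of `X` are finite, and the `k`-space `X` is discrete.
-/

open Filter

theorem IsAscoli.of_homeomorph {A B : Type*} [TopologicalSpace A] [TopologicalSpace B]
    (hB : IsAscoli B) (e : A ≃ₜ B) : IsAscoli A := by
  intro K hK
  let precomp : C(A, ℝ) → C(B, ℝ) := fun f => f.comp e.symm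
  have hK' : IsCompact (precomp '' K) := hK.image (ContinuousMap.continuous_precomp _)
  have hG : Equicontinuous fun f : K => ((f : C(A, ℝ)).comp e.symm : B → ℝ) :=
    (hB _ hK').comp fun f : K => ⟨precomp f, mem_image_of_mem _ f.2⟩
  refine equicontinuous_iff_continuous.mpr ?_
  convert (equicontinuous_iff_continuous.mp hG).comp e.continuous
  funext a g
  change (g : C(A, ℝ)) a = (g : C(A, ℝ)) (e.symm (e a))
  rw [e.symm_apply_apply]

theorem IsAscoli.equicontinuous_of_tendsto {Y : Type*} [TopologicalSpace Y] (hY : IsAscoli Y)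
    {u : ℕ → C(Y, ℝ)} {g : C(Y, ℝ)} (hu : Tendsto u atTop (𝓝 g)) :
    Equicontinuous fun n => ⇑(u n) :=
  (hY _ hu.isCompact_insert_range).comp fun n => ⟨u n, mem_insert_of_mem _ (mem_range_self n)⟩

theorem ContinuousMap.equicontinuousWithinAt_of_isCompact {Y α : Type*} [TopologicalSpace Y]
    [UniformSpace α] {Q : Set C(Y, α)} (hQ : IsCompact Q) {D : Set Y} (hD : IsCompact D)
    {y₀ : Y} (hy₀ : y₀ ∈ D) :
    EquicontinuousWithinAt (fun f : Q => (f : Y → α)) D y₀ := by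
  have : CompactSpace D := isCompact_iff_compactSpace.mp hD
  have hcont : ContinuousOn (fun (y : Y) (f : C(Y, α)) => f y).uncurry (D ×ˢ Q) := by
    rw [continuousOn_iff_continuous_domRestrict]
    change Continuous fun p : ↥(D ×ˢ Q) => (ContinuousMap.restrict D p.1.2) ⟨p.1.1, p.2.1⟩
    have := ContinuousMap.continuous_restrict (Y := α) D
    fun_prop
  intro U hU
  obtain ⟨v, hv, hvU⟩ := hQ.mem_uniformity_of_prod hcont hy₀ (tendsto_swap_uniformity hU)
  filter_upwards [hv] with y hy f using hvU y hy f f.2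

theorem exists_seq_tendsto_of_mem_closure_of_finite_ne {ι : Type*} {Y : ι → Type*}
    [∀ i, PseudoMetricSpace (Y i)] {x₀ : ∀ i, Y i} {A : Set (∀ i, Y i)}
    (hA : ∀ y ∈ A, {i | y i ≠ x₀ i}.Finite) (hx₀ : x₀ ∈ closure A) :
    ∃ z : ℕ → ∀ i, Y i, (∀ n, z n ∈ A) ∧ Tendsto z atTop (𝓝 x₀) := by
  classical
  have hnear : ∀ (F : Finset ι) (n : ℕ),
      ∃ y ∈ A, ∀ i ∈ F, dist (y i) (x₀ i) < 1 / (n + 1) := by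
    intro F n
    have hV : {y : ∀ i, Y i | ∀ i ∈ F, dist (y i) (x₀ i) < 1 / (n + 1)} ∈ 𝓝 x₀ :=
      mem_of_superset (set_pi_mem_nhds F.finite_toSet fun i _ => Metric.ball_mem_nhds _
        Nat.one_div_pos_of_nat) fun y hy i hi => hy i hi
    exact mem_closure_iff_nhds.mp hx₀ _ hV |>.imp fun y hy => ⟨hy.2, hy.1⟩
  choose a haA ha using hnear
  -- `F n` collects the coordinates in which some earlier term differs from `x₀`
  let F : ℕ → Finset ι := fun n =>
    Nat.rec (motive := fun _ => Finset ι) ∅ (fun n Fn => Fn ∪ (hA _ (haA Fn n)).toFinset) n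
  have hF_mono : Monotone F := monotone_nat_of_le_succ fun n => Finset.subset_union_left
  have hF_succ : ∀ n i, a (F n) n i ≠ x₀ i → i ∈ F (n + 1) := fun n i hi =>
    Finset.mem_union_right _ ((hA _ (haA _ n)).mem_toFinset.mpr hi)
  refine ⟨fun n => a (F n) n, fun n => haA _ n, tendsto_pi_nhds.mpr fun i => ?_⟩
  by_cases! hi : ∃ m, i ∈ F m
  · obtain ⟨m, hm⟩ := hi
    refine Metric.tendsto_atTop.mpr fun ε hε => ?_
    obtain ⟨N, hN⟩ := exists_nat_one_div_lt hε
    refine ⟨max m N, fun n hn => (ha _ n i (hF_mono (le_of_max_le_left hn) hm)).trans_le ?_⟩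
    exact le_trans (by gcongr; exact le_of_max_le_right hn) hN.le
  · have : ∀ n, a (F n) n i = x₀ i := fun n => by_contra fun h => hi (n + 1) (hF_succ n i h)
    simp only [this, tendsto_const_nhds]

theorem isAscoli_pi {ι : Type*} {Y : ι → Type*} [∀ i, PseudoMetricSpace (Y i)] :
    IsAscoli (∀ i, Y i) := by
  classical
  intro Q hQ x₀
  rw [Metric.equicontinuousAt_iff_right]
  by_contra! hfreq
  obtain ⟨ε, hε, hfreq⟩ := hfreq
  let A := {y : ∀ i, Y i | {i | y i ≠ x₀ i}.Finite ∧
    ∃ f ∈ Q, ε / 2 ≤ dist ((f : C(∀ i, Y i, ℝ)) x₀) (f y)}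
  -- a witness `y` of discontinuity can be replaced by one that differs from `x₀` in finitely
  -- many coordinates, at the cost of `ε / 2`
  have hx₀A : x₀ ∈ closure A := by
    refine mem_closure_iff.mpr fun U hU hx₀U => ?_
    obtain ⟨y, ⟨⟨f, hfQ⟩, hf⟩, hyU⟩ := (hfreq.and_eventually (hU.mem_nhds hx₀U)).exists
    have hW : U ∩ {z | dist (f z) (f y) < ε / 2} ∈ 𝓝 y :=
      inter_mem (hU.mem_nhds hyU)
        (f.continuous.continuousAt (Metric.ball_mem_nhds _ (half_pos hε)))
    obtain ⟨G, hGU, hGf⟩ := exists_finset_piecewise_mem_of_mem_nhds hW x₀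
    refine ⟨G.piecewise y x₀, hGU, G.finite_toSet.subset fun i hi => ?_, f, hfQ, ?_⟩
    · by_contra hiG
      exact hi (G.piecewise_eq_of_notMem _ _ hiG)
    · have hGf' : dist (f (G.piecewise y x₀)) (f y) < ε / 2 := hGf
      have hf' : ε ≤ dist (f x₀) (f y) := hf
      linarith [dist_triangle (f x₀) (f (G.piecewise y x₀)) (f y)]
  obtain ⟨z, hzA, hz⟩ := exists_seq_tendsto_of_mem_closure_of_finite_ne (fun y hy => hy.1) hx₀A
  have hD : IsCompact (insert x₀ (range z)) := hz.isCompact_insert_range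
  have hz' : Tendsto z atTop (𝓝[insert x₀ (range z)] x₀) :=
    tendsto_nhdsWithin_iff.mpr ⟨hz, .of_forall fun n => mem_insert_of_mem _ (mem_range_self n)⟩
  have hclose := hz'.eventually <| ContinuousMap.equicontinuousWithinAt_of_isCompact hQ hD
    (mem_insert _ _) _ (Metric.dist_mem_uniformity (half_pos hε))
  obtain ⟨n, hn⟩ := hclose.exists
  obtain ⟨f, hfQ, hf⟩ := (hzA n).2
  exact (hn ⟨f, hfQ⟩).not_ge hf

noncomputable def ContinuousMap.weakSpaceHomeoFnOfDiscrete {𝕜 X : Type*} [NormedField 𝕜]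
    [TopologicalSpace X] [DiscreteTopology X] : WeakSpace 𝕜 C(X, 𝕜) ≃ₜ (X → 𝕜) where
  toFun f := (toWeakSpace 𝕜 C(X, 𝕜)).symm f
  invFun g := toWeakSpace 𝕜 C(X, 𝕜) (ContinuousMap.homeoFnOfDiscrete.symm g)
  left_inv _ := rfl
  right_inv _ := rfl
  continuous_toFun :=
    continuous_pi fun x => WeakBilin.eval_continuous _ (ContinuousMap.evalCLM 𝕜 x)
  continuous_invFun :=
    (toWeakSpaceCLM 𝕜 C(X, 𝕜)).continuous.comp ContinuousMap.homeoFnOfDiscrete.symm.continuous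

section WeakSpace

variable {𝕜 E : Type*} [NormedField 𝕜] [AddCommGroup E] [Module 𝕜 E] [TopologicalSpace E]

noncomputable def StrongDual.toWeakContinuousMap (φ : StrongDual 𝕜 E) : C(WeakSpace 𝕜 E, 𝕜) :=
  ⟨fun x => φ ((toWeakSpace 𝕜 E).symm x), WeakBilin.eval_continuous _ φ⟩

theorem WeakSpace.exists_finset_of_mem_nhds_zero {V : Set (WeakSpace 𝕜 E)} (hV : V ∈ 𝓝 0) :
    ∃ s : Finset (StrongDual 𝕜 E), ∀ x : E, (∀ φ ∈ s, φ x = 0) → toWeakSpace 𝕜 E x ∈ V := by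
  obtain ⟨U, hU, hUV⟩ := (LinearMap.hasBasis_weakBilin (topDualPairing 𝕜 E).flip).mem_iff.mp hV
  obtain ⟨s, r, hr, rfl⟩ := (SeminormFamily.basisSets_iff _).mp hU
  refine ⟨s, fun x hx => hUV ((Seminorm.mem_ball_zero _).2 ?_)⟩
  exact Seminorm.finset_sup_apply_lt hr fun φ hφ => by
    change ‖φ x‖ < r
    simpa [hx φ hφ] using hr

theorem WeakSpace.exists_finset_mem_span_of_equicontinuousAt {ι : Type*}
    {ψ : ι → StrongDual 𝕜 E} (h : EquicontinuousAt (fun i => ⇑(ψ i).toWeakContinuousMap) 0) :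
    ∃ s : Finset (StrongDual 𝕜 E),
      ∀ i, (ψ i : E →ₗ[𝕜] 𝕜) ∈ Submodule.span 𝕜 (range fun φ : s => (φ : E →ₗ[𝕜] 𝕜)) := by
  obtain ⟨s, hs⟩ := WeakSpace.exists_finset_of_mem_nhds_zero
    (Metric.equicontinuousAt_iff_right.mp h 1 one_pos)
  refine ⟨s, fun i => mem_span_of_iInf_ker_le_ker fun x hx => LinearMap.mem_ker.mpr ?_⟩
  simp only [Submodule.mem_iInf, LinearMap.mem_ker, ContinuousLinearMap.coe_coe] at hx ⊢
  by_contra hne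
  -- on the kernel of the finitely many `φ ∈ s`, each `ψ i` is bounded by `1`, hence vanishes
  have h1 : dist (ψ i 0) (ψ i ((ψ i x)⁻¹ • x)) < 1 :=
    hs ((ψ i x)⁻¹ • x) (fun φ hφ => by simp [hx ⟨φ, hφ⟩]) i
  simp [hne] at h1

theorem WeakSpace.finite_of_linearIndependent_of_equicontinuousAt {ι : Type*}
    {ψ : ι → StrongDual 𝕜 E} (hψ : LinearIndependent 𝕜 ψ)
    (h : EquicontinuousAt (fun i => ⇑(ψ i).toWeakContinuousMap) 0) : Finite ι := by
  obtain ⟨s, hs⟩ := WeakSpace.exists_finset_mem_span_of_equicontinuousAt h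
  have hψ' := hψ.map' (ContinuousLinearMap.coeLM 𝕜)
    (LinearMap.ker_eq_bot.mpr ContinuousLinearMap.coe_injective)
  exact hψ'.finite_of_le_span_finite _ _ (range_subset_iff.mpr hs)

end WeakSpace

section Normed

variable {𝕜 F : Type*} [RCLike 𝕜] [NormedAddCommGroup F] [NormedSpace 𝕜 F]

theorem WeakSpace.exists_norm_le_of_isCompact {Q : Set (WeakSpace 𝕜 F)} (hQ : IsCompact Q) :
    ∃ C, ∀ x ∈ Q, ‖(toWeakSpace 𝕜 F).symm x‖ ≤ C := by
  -- uniform boundedness, applied to `Q` viewed inside the bidual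
  have hpt (ψ : StrongDual 𝕜 F) : ∃ C, ∀ x : Q,
      ‖NormedSpace.inclusionInDoubleDual 𝕜 F ((toWeakSpace 𝕜 F).symm x) ψ‖ ≤ C := by
    obtain ⟨C, hC⟩ := isBounded_iff_forall_norm_le.mp
      (hQ.image ψ.toWeakContinuousMap.continuous).isBounded
    exact ⟨C, fun x => hC _ (mem_image_of_mem _ x.2)⟩
  obtain ⟨C, hC⟩ := banach_steinhaus hpt
  refine ⟨C, fun x hx => ?_⟩
  rw [← (NormedSpace.inclusionInDoubleDualLi 𝕜).norm_map]
  exact hC ⟨x, hx⟩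

theorem StrongDual.tendsto_toWeakContinuousMap {ι : Type*} {l : Filter ι}
    {ψ : ι → StrongDual 𝕜 F} {φ : StrongDual 𝕜 F} (h : Tendsto ψ l (𝓝 φ)) :
    Tendsto (fun i => (ψ i).toWeakContinuousMap) l (𝓝 φ.toWeakContinuousMap) := by
  refine ContinuousMap.tendsto_iff_forall_isCompact_tendstoUniformlyOn.mpr fun Q hQ => ?_
  obtain ⟨C, hC⟩ := WeakSpace.exists_norm_le_of_isCompact hQ
  have hC₁ : 0 < max C 1 := lt_max_of_lt_right one_pos
  refine Metric.tendstoUniformlyOn_iff.mpr fun ε hε => ?_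
  filter_upwards [Metric.tendsto_nhds.mp h _ (div_pos hε hC₁)] with i hi x hx
  calc dist (φ.toWeakContinuousMap x) ((ψ i).toWeakContinuousMap x)
      = ‖(ψ i - φ) ((toWeakSpace 𝕜 F).symm x)‖ := by
        rw [dist_comm, dist_eq_norm]; rfl
    _ ≤ ‖ψ i - φ‖ * max C 1 :=
        (ψ i - φ).le_opNorm_of_le ((hC x hx).trans (le_max_left _ _))
    _ < ε := by
        rw [← dist_eq_norm]
        exact (lt_div_iff₀ hC₁).mp hi

end Normed

theorem ContinuousMap.linearIndependent_evalCLM {X : Type*} [TopologicalSpace X]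
    [CompletelyRegularSpace X] [T1Space X] :
    LinearIndependent ℝ (fun x : X => (ContinuousMap.evalCLM ℝ x : StrongDual ℝ C(X, ℝ))) := by
  classical
  refine linearIndependent_iff'.mpr fun s c hc i hi => ?_
  obtain ⟨f, hf, hfi, hf1⟩ := CompletelyRegularSpace.completely_regular i _
    (s.erase i).finite_toSet.isClosed (by simp)
  let bump : C(X, ℝ) := ⟨fun x => 1 - f x, by fun_prop⟩
  have hbump : ∀ j ∈ s, bump j = if j = i then 1 else 0 := by
    intro j hj
    by_cases hji : j = i
    · simp [bump, hji, hfi]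
    · simp [bump, hji, hf1 (Finset.mem_erase.mpr ⟨hji, hj⟩)]
  have := congrArg (fun L => L bump) hc
  simpa [Finset.sum_congr rfl fun j hj => congrArg (c j * ·) (hbump j hj), hi] using this

theorem IsCompact.finite_of_isAscoli_weakSpace {X : Type*} [TopologicalSpace X]
    [CompletelyRegularSpace X] [T1Space X] (hA : IsAscoli (WeakSpace ℝ C(X, ℝ))) {K : Set X}
    (hK : IsCompact K) : K.Finite := by
  by_contra hinf
  change K.Infinite at hinf
  have : CompactSpace K := isCompact_iff_compactSpace.mp hK
  let k := hinf.natEmbedding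
  let restrict : C(X, ℝ) →L[ℝ] C(K, ℝ) := ContinuousMap.compCLM ℝ ℝ ⟨(↑), continuous_subtype_val⟩
  let c : ℕ → ℝˣ := fun n => Units.mk0 (n + 1 : ℝ)⁻¹ (by positivity)
  let ψ : ℕ → StrongDual ℝ C(K, ℝ) := fun n => (c n : ℝ) • ContinuousMap.evalCLM ℝ (k n)
  have hψ : Tendsto ψ atTop (𝓝 0) := by
    refine squeeze_zero_norm (f := ψ) (a := fun n : ℕ => 1 / ((n : ℝ) + 1)) (fun n => ?_)
      tendsto_one_div_add_atTop_nhds_zero_nat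
    refine ContinuousLinearMap.opNorm_le_bound _ (by positivity) fun f => ?_
    simp only [ψ, c, smul_apply, ContinuousMap.evalCLM_apply, norm_smul]
    gcongr
    · simp [abs_of_pos (Nat.cast_add_one_pos (α := ℝ) n)]
    · exact f.norm_coe_le_norm (k n)
  have hΦ := ((ContinuousMap.continuous_precomp
    (WeakSpace.map restrict : C(WeakSpace ℝ C(X, ℝ), WeakSpace ℝ C(K, ℝ)))).tendsto _).comp
    (StrongDual.tendsto_toWeakContinuousMap hψ)
  have hlin : LinearIndependent ℝ fun n => (ψ n).comp restrict :=
    (ContinuousMap.linearIndependent_evalCLM.comp _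
      (Subtype.val_injective.comp k.injective)).units_smul c
  have := WeakSpace.finite_of_linearIndependent_of_equicontinuousAt hlin
    (hA.equicontinuous_of_tendsto hΦ 0)
  exact not_finite ℕ

theorem statement13_general {X : Type*} [TopologicalSpace X] [CompletelyRegularSpace X] [T2Space X]
    (hk : ∀ s : Set X,
      (∀ K : Set X, IsCompact K → IsClosed ((Subtype.val ⁻¹' s) : Set K)) → IsClosed s) :
    IsAscoli (WeakSpace ℝ C(X, ℝ)) ↔ DiscreteTopology X := by
  constructor
  · intro hA
    refine discreteTopology_iff_forall_isClosed.mpr fun s => hk s fun K hK => ?_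
    have : Finite K := (hK.finite_of_isAscoli_weakSpace hA).to_subtype
    exact isClosed_discrete _
  · intro _
    exact isAscoli_pi.of_homeomorph ContinuousMap.weakSpaceHomeoFnOfDiscrete

/-- Let `X` be a completely regular Hausdorff `μ`-space and `k`-space. Then `C_k(X)` (with the
compact-open topology) is weakly Ascoli if and only if `X` is discrete. -/
theorem statement13 {X : Type*} [TopologicalSpace X] [CompletelyRegularSpace X] [T2Space X]
    (hμ : ∀ A : Set X, FunctionallyBounded A → IsCompact (closure A))
    (hk : ∀ s : Set X,
      (∀ K : Set X, IsCompact K → IsClosed ((Subtype.val ⁻¹' s) : Set K)) → IsClosed s) :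
    IsAscoli (WeakSpace ℝ C(X, ℝ)) ↔ DiscreteTopology X :=
  statement13_general hk
end
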